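/- arXiv:2208.00579 — 2 statements merged into one kernel-verified Lean document; each statement's English description precedes it below -/
import Mathlib

section
/- Let φ(q_i), φ(k_1), …, φ(k_N) be vectors in ℝ^D, v_1, …, v_N vectors in ℝ^{D_v}, γ > 0 and 0 ≤ β < 1. Define the recurrences m_i = β m_{i−1} − φ(k_i)v_iᵀ, s_i = s_{i−1} − γ m_i, z_i = z_{i−1} + φ(k_i), with m₀ = 0 ∈ ℝ^{D×D_v}, s₀ = 0 ∈ ℝ^{D×D_v}, z₀ = 0 ∈ ℝ^D. Suppose φ(q_i)ᵀ z_i ≠ 0. Then the RNN causal momentum attention output v̂_i = (φ(q_i)ᵀ s_i) / (φ(q_i)ᵀ z_i) equals the closed-form causal momentum attention v̂_i = γ φ(q_i)ᵀ ∑_{j=1}^{i} ( (1 − β^{i−j+1})/(1 − β) φ(k_j)v_jᵀ ) / ( φ(q_i)ᵀ ∑_{j=1}^{i} φ(k_j) ). -/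
/-!
Unrolling the recurrences gives `z i = ∑_{j ≤ i} φ(k_j)` and
`m i = -∑_{j ≤ i} β^(i-j) φ(k_j)v_jᵀ`.
Summing `-γ m` over the steps then collects, in front of each `φ(k_j)v_jᵀ`, the geometric sum
`∑_{t ≤ i-j} β^t = (1 - β^(i-j+1)) / (1 - β)`.
-/

open Matrix Finset

section Recurrence

variable {R M : Type*}

theorem eq_sum_Icc_of_eq_pred_add [AddCommMonoid M] {z f : ℕ → M} (h0 : z 0 = 0)
    (h : ∀ j, 1 ≤ j → z j = z (j - 1) + f j) (n : ℕ) : z n = ∑ j ∈ Icc 1 n, f j := by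
  induction n with
  | zero => simp [h0]
  | succ n ih =>
    rw [h (n + 1) n.succ_pos, Nat.add_sub_cancel, ih, sum_Icc_succ_top (Nat.le_add_left 1 n)]

theorem eq_sum_Icc_pow_smul_of_eq_smul_pred_add [Monoid R] [AddCommMonoid M]
    [DistribMulAction R M] {β : R} {m a : ℕ → M} (h0 : m 0 = 0)
    (h : ∀ j, 1 ≤ j → m j = β • m (j - 1) + a j) (n : ℕ) :
    m n = ∑ j ∈ Icc 1 n, β ^ (n - j) • a j := by
  induction n with
  | zero => simp [h0]
  | succ n ih =>
    rw [h (n + 1) n.succ_pos, Nat.add_sub_cancel, ih, sum_Icc_succ_top (Nat.le_add_left 1 n),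
      smul_sum, Nat.sub_self, pow_zero, one_smul]
    congr 1
    refine sum_congr rfl fun j hj => ?_
    rw [smul_smul, ← pow_succ', Nat.sub_add_comm (mem_Icc.1 hj).2]

theorem sum_Icc_sum_Icc_pow_sub_smul [Semiring R] [AddCommMonoid M] [Module R M] (β : R)
    (a : ℕ → M) (n : ℕ) :
    ∑ j ∈ Icc 1 n, ∑ l ∈ Icc 1 j, β ^ (j - l) • a l =
      ∑ l ∈ Icc 1 n, (∑ t ∈ range (n - l + 1), β ^ t) • a l := by
  induction n with
  | zero => simp
  | succ n ih =>
    have hn : 1 ≤ n + 1 := Nat.le_add_left 1 n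
    rw [sum_Icc_succ_top hn, ih, sum_Icc_succ_top hn, sum_Icc_succ_top hn, Nat.sub_self,
      zero_add, range_one, sum_singleton, ← add_assoc, ← sum_add_distrib]
    congr 1
    refine sum_congr rfl fun l hl => ?_
    rw [← add_smul, Nat.sub_add_comm (mem_Icc.1 hl).2, sum_range_succ _ (n - l + 1)]

end Recurrence

theorem rnn_causal_momentum_attention_eq_closed_form_general {D Dv : ℕ}
    (fq : Fin D → ℝ) (fk : ℕ → Fin D → ℝ) (v : ℕ → Fin Dv → ℝ)
    (γ β : ℝ) (hβ1 : β < 1)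
    (m s : ℕ → Matrix (Fin D) (Fin Dv) ℝ) (z : ℕ → Fin D → ℝ)
    (hm0 : m 0 = 0) (hs0 : s 0 = 0) (hz0 : z 0 = 0)
    (hm : ∀ j, 1 ≤ j → m j = β • m (j - 1) - Matrix.vecMulVec (fk j) (v j))
    (hs : ∀ j, 1 ≤ j → s j = s (j - 1) - γ • m j)
    (hz : ∀ j, 1 ≤ j → z j = z (j - 1) + fk j)
    (i : ℕ) :
    (fq ⬝ᵥ z i)⁻¹ • Matrix.vecMul fq (s i) =
      (fq ⬝ᵥ ∑ j ∈ Finset.Icc 1 i, fk j)⁻¹ •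
        (γ • Matrix.vecMul fq (∑ j ∈ Finset.Icc 1 i,
          ((1 - β ^ (i - j + 1)) / (1 - β)) • Matrix.vecMulVec (fk j) (v j))) := by
  have hm_sum := eq_sum_Icc_pow_smul_of_eq_smul_pred_add hm0
    (a := fun j => -vecMulVec (fk j) (v j)) fun j hj => by rw [hm j hj, sub_eq_add_neg]
  have hs_sum := eq_sum_Icc_of_eq_pred_add hs0
    (f := fun j => -(γ • m j)) fun j hj => by rw [hs j hj, sub_eq_add_neg]
  have hs_closed : s i = γ • ∑ j ∈ Icc 1 i,
      ((1 - β ^ (i - j + 1)) / (1 - β)) • vecMulVec (fk j) (v j) := by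
    simp only [hs_sum, hm_sum, smul_neg, sum_neg_distrib, neg_neg, ← smul_sum,
      sum_Icc_sum_Icc_pow_sub_smul, geom_sum_eq hβ1.ne]
    congr 2 with j
    rw [← neg_sub, ← neg_sub 1, neg_div_neg_eq]
  rw [eq_sum_Icc_of_eq_pred_add hz0 hz, hs_closed, vecMul_smul]

/-- The RNN formulation of causal momentum attention
(states `m_i = β m_{i-1} - φ(k_i)v_iᵀ`, `s_i = s_{i-1} - γ m_i`,
`z_i = z_{i-1} + φ(k_i)` with zero initialization, output
`v̂_i = (φ(q_i)ᵀ s_i)/(φ(q_i)ᵀ z_i)`) agrees with the closed-form causal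
momentum attention
`v̂_i = γ φ(q_i)ᵀ ∑_{j=1}^i ((1-β^{i-j+1})/(1-β)) φ(k_j)v_jᵀ / (φ(q_i)ᵀ ∑_{j=1}^i φ(k_j))`,
provided the denominator `φ(q_i)ᵀ z_i` is nonzero. -/
theorem rnn_causal_momentum_attention_eq_closed_form {D Dv : ℕ}
    (fq : Fin D → ℝ) (fk : ℕ → Fin D → ℝ) (v : ℕ → Fin Dv → ℝ)
    (γ β : ℝ) (hγ : 0 < γ) (hβ0 : 0 ≤ β) (hβ1 : β < 1)
    (m s : ℕ → Matrix (Fin D) (Fin Dv) ℝ) (z : ℕ → Fin D → ℝ)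
    (hm0 : m 0 = 0) (hs0 : s 0 = 0) (hz0 : z 0 = 0)
    (hm : ∀ j, 1 ≤ j → m j = β • m (j - 1) - Matrix.vecMulVec (fk j) (v j))
    (hs : ∀ j, 1 ≤ j → s j = s (j - 1) - γ • m j)
    (hz : ∀ j, 1 ≤ j → z j = z (j - 1) + fk j)
    (i : ℕ) (hi : 1 ≤ i)
    (hden : fq ⬝ᵥ z i ≠ 0) :
    (fq ⬝ᵥ z i)⁻¹ • Matrix.vecMul fq (s i) =
      (fq ⬝ᵥ ∑ j ∈ Finset.Icc 1 i, fk j)⁻¹ •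
        (γ • Matrix.vecMul fq (∑ j ∈ Finset.Icc 1 i,
          ((1 - β ^ (i - j + 1)) / (1 - β)) • Matrix.vecMulVec (fk j) (v j))) :=
  rnn_causal_momentum_attention_eq_closed_form_general fq fk v γ β hβ1 m s z hm0 hs0 hz0 hm hs hz i
end

section
/- Let f(x) = (1/2)xᵀAx + xᵀb with A ∈ ℝ^{d×d} symmetric positive definite, smallest eigenvalue ν > 0 and largest eigenvalue L, and let x* = −A⁻¹b. If {x^k}_{k≥0} is generated by the heavy ball method x^{k+1} = x^k − γ∇f(x^k) + β(x^k − x^{k−1}) with step size 0 < γ ≤ 1/L and momentum 0 ≤ β < 1, then x^k converges to x* as k → ∞. -/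
/-!
Subtracting the fixed point `x*` and expanding in an orthonormal eigenbasis of `A` decouples the
iteration into scalar recurrences `e (k + 2) = (1 + β - γ λ) e (k + 1) - β e k`, one per
eigenvalue `λ`. Since `0 < γ λ ≤ 1` and `0 ≤ β < 1`, both complex roots `r, s` of
`z ^ 2 - (1 + β - γ λ) z + β` lie in the open unit disk. Then
`e (k + 1) - r e k = s ^ k (e 1 - r e 0)`, so `‖e (k + 1)‖ ≤ ‖r‖ ‖e k‖ + C ‖s‖ ^ k`, which makes
`‖e‖` summable and hence forces `e k → 0`.
-/

open Matrix Filter Topology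

theorem tendsto_zero_of_le_mul_add_summable {u ε : ℕ → ℝ} {ρ : ℝ} (hu : ∀ k, 0 ≤ u k)
    (hε : ∀ k, 0 ≤ ε k) (hε_sum : Summable ε) (hρ0 : 0 ≤ ρ) (hρ1 : ρ < 1)
    (h : ∀ k, u (k + 1) ≤ ρ * u k + ε k) : Tendsto u atTop (𝓝 0) := by
  refine (summable_of_sum_range_le hu (c := (u 0 + ∑' k, ε k) / (1 - ρ)) fun n => ?_)
    |>.tendsto_atTop_zero
  set S := ∑ k ∈ Finset.range (n + 1), u k
  have hS : S ≤ ρ * S + ∑' k, ε k + u 0 := calc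
    S = ∑ k ∈ Finset.range n, u (k + 1) + u 0 := Finset.sum_range_succ' u n
    _ ≤ ∑ k ∈ Finset.range n, (ρ * u k + ε k) + u 0 := by gcongr with k; exact h k
    _ = ρ * ∑ k ∈ Finset.range n, u k + ∑ k ∈ Finset.range n, ε k + u 0 := by
      rw [Finset.sum_add_distrib, Finset.mul_sum]
    _ ≤ ρ * S + ∑' k, ε k + u 0 := by
      gcongr
      · exact Finset.sum_le_sum_of_subset_of_nonneg (by simp) fun k _ _ => hu k
      · exact hε_sum.sum_le_tsum _ fun k _ => hε k
  calc ∑ k ∈ Finset.range n, u k ≤ S :=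
        Finset.sum_le_sum_of_subset_of_nonneg (by simp) fun k _ _ => hu k
    _ ≤ (u 0 + ∑' k, ε k) / (1 - ρ) := by rw [le_div_iff₀ (by linarith)]; linarith

theorem tendsto_zero_of_recurrence_of_norm_lt_one {𝕜 : Type*} [NormedField 𝕜] {r s : 𝕜}
    (hr : ‖r‖ < 1) (hs : ‖s‖ < 1) {e : ℕ → 𝕜}
    (he : ∀ k, e (k + 2) = (r + s) * e (k + 1) - r * s * e k) : Tendsto e atTop (𝓝 0) := by
  have hw : ∀ k, e (k + 1) - r * e k = s ^ k * (e 1 - r * e 0) := by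
    intro k
    induction k with
    | zero => simp
    | succ k ih => rw [he, pow_succ]; linear_combination s * ih
  have hstep : ∀ k, ‖e (k + 1)‖ ≤ ‖r‖ * ‖e k‖ + ‖s‖ ^ k * ‖e 1 - r * e 0‖ := fun k => calc
    ‖e (k + 1)‖ = ‖r * e k + s ^ k * (e 1 - r * e 0)‖ := by rw [← hw]; ring_nf
    _ ≤ ‖r‖ * ‖e k‖ + ‖s‖ ^ k * ‖e 1 - r * e 0‖ := by
      simpa only [norm_mul, norm_pow] using norm_add_le (r * e k) (s ^ k * (e 1 - r * e 0))
  rw [tendsto_zero_iff_norm_tendsto_zero]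
  exact tendsto_zero_of_le_mul_add_summable (fun _ => norm_nonneg _) (fun _ => by positivity)
    ((summable_geometric_of_lt_one (norm_nonneg _) hs).mul_right _) (norm_nonneg _) hr hstep

theorem Complex.norm_lt_one_of_sq_sub_mul_add_eq_zero {a β : ℝ} (hβ : |β| < 1)
    (ha : |a| < 1 + β) {z : ℂ} (hz : z ^ 2 - a * z + β = 0) : ‖z‖ < 1 := by
  have hre : z.re ^ 2 - z.im ^ 2 - a * z.re + β = 0 := by
    simpa [sq] using congrArg Complex.re hz
  have him : (2 * z.re - a) * z.im = 0 := by
    have := congrArg Complex.im hz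
    simp only [sq, Complex.add_im, Complex.sub_im, Complex.mul_im, Complex.ofReal_re,
      Complex.ofReal_im, zero_mul, add_zero, Complex.zero_im] at this
    linear_combination this
  rw [abs_lt] at hβ ha
  -- A non-real root has `‖z‖ ^ 2 = β`; a real one stays inside `(-1, 1)` because the polynomial
  -- is positive at `±1` and monotone beyond.
  rw [← sq_lt_one_iff₀ (norm_nonneg z), Complex.sq_norm, Complex.normSq_apply]
  rcases mul_eq_zero.mp him with hx | hy
  · nlinarith
  · rw [hy] at hre ⊢
    by_contra! h
    rcases le_or_gt 0 z.re with hx | hx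
    · have hx1 : 1 ≤ z.re := by nlinarith
      nlinarith [mul_nonneg (sub_nonneg.2 hx1) (by linarith : (0 : ℝ) ≤ z.re + 1 - a)]
    · have hx1 : z.re ≤ -1 := by nlinarith
      nlinarith [mul_nonneg (by linarith : (0 : ℝ) ≤ -1 - z.re)
        (by linarith : (0 : ℝ) ≤ 1 - a - z.re)]

theorem tendsto_zero_of_recurrence {a β : ℝ} (hβ : |β| < 1) (ha : |a| < 1 + β) {e : ℕ → ℝ}
    (he : ∀ k, e (k + 2) = a * e (k + 1) - β * e k) : Tendsto e atTop (𝓝 0) := by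
  obtain ⟨δ, hδ⟩ := IsAlgClosed.exists_eq_mul_self (discrim 1 (-a : ℂ) β)
  rw [discrim] at hδ
  set r : ℂ := (a + δ) / 2
  set s : ℂ := (a - δ) / 2
  have hsum : r + s = a := by ring
  have hprod : r * s = β := by linear_combination hδ / 4
  have hr : ‖r‖ < 1 := Complex.norm_lt_one_of_sq_sub_mul_add_eq_zero hβ ha (by
    rw [← hsum, ← hprod]; ring)
  have hs : ‖s‖ < 1 := Complex.norm_lt_one_of_sq_sub_mul_add_eq_zero hβ ha (by
    rw [← hsum, ← hprod]; ring)
  have hlim := tendsto_zero_of_recurrence_of_norm_lt_one hr hs (e := fun k => (e k : ℂ))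
    fun k => by rw [hsum, hprod]; exact_mod_cast he k
  simpa [Function.comp_def] using (Complex.continuous_re.tendsto 0).comp hlim

theorem Matrix.IsHermitian.inner_eigenvectorBasis_toEuclideanLin {n : Type*} [Fintype n]
    [DecidableEq n] {A : Matrix n n ℝ} (hA : A.IsHermitian) (i : n) (v : EuclideanSpace ℝ n) :
    inner ℝ (hA.eigenvectorBasis i) (toEuclideanLin A v) =
      hA.eigenvalues i * inner ℝ (hA.eigenvectorBasis i) v := by
  have hsymm := isSymmetric_toEuclideanLin_iff.mpr hA
  rw [← hsymm, ← real_inner_smul_left]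
  congr 1
  apply (WithLp.equiv 2 _).injective
  simpa using hA.mulVec_eigenvectorBasis i

theorem OrthonormalBasis.tendsto_of_tendsto_inner {ι E : Type*} [Fintype ι]
    [NormedAddCommGroup E] [InnerProductSpace ℝ E] (B : OrthonormalBasis ι ℝ E) {α : Type*}
    {l : Filter α} {y : α → E} {x : E}
    (h : ∀ i, Tendsto (fun k => inner ℝ (B i) (y k)) l (𝓝 (inner ℝ (B i) x))) :
    Tendsto y l (𝓝 x) := by
  have := tendsto_finsetSum Finset.univ fun i _ => (h i).smul_const (B i)
  simpa only [B.sum_repr'] using this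

theorem Matrix.IsHermitian.tendsto_zero_of_heavyBall_recurrence {n : Type*} [Fintype n]
    [DecidableEq n] {A : Matrix n n ℝ} (hA : A.IsHermitian) {γ β : ℝ} (hβ : |β| < 1)
    (hstable : ∀ i, |1 + β - γ * hA.eigenvalues i| < 1 + β) {y : ℕ → EuclideanSpace ℝ n}
    (hy : ∀ k, y (k + 2) = y (k + 1) - γ • toEuclideanLin A (y (k + 1)) + β • (y (k + 1) - y k)) :
    Tendsto y atTop (𝓝 0) := by
  refine hA.eigenvectorBasis.tendsto_of_tendsto_inner fun i => ?_
  rw [inner_zero_right]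
  refine tendsto_zero_of_recurrence hβ (hstable i) fun k => ?_
  simp only [hy k, inner_add_right, inner_sub_right, inner_smul_right,
    hA.inner_eigenvectorBasis_toEuclideanLin]
  ring

theorem heavy_ball_converges_to_minimizer_general {d : ℕ}
    (A : Matrix (Fin d) (Fin d) ℝ) (hA : A.PosDef)
    (L : ℝ)
    (hL : IsGreatest (Set.range hA.1.eigenvalues) L)
    (b : EuclideanSpace ℝ (Fin d)) (γ β : ℝ)
    (hγ0 : 0 < γ) (hγL : γ ≤ 1 / L)
    (hβ0 : 0 ≤ β) (hβ1 : β < 1)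
    (x : ℕ → EuclideanSpace ℝ (Fin d))
    (hx : ∀ k, 1 ≤ k →
      x (k + 1) = x k - γ • (Matrix.toEuclideanLin A (x k) + b)
        + β • (x k - x (k - 1)))
    (xstar : EuclideanSpace ℝ (Fin d))
    (hxstar : xstar = -(Matrix.toEuclideanLin A⁻¹ b)) :
    Tendsto x atTop (nhds xstar) := by
  have hfix : toEuclideanLin A xstar = -b := by
    apply (WithLp.equiv 2 _).injective
    simp [hxstar, mulVec_mulVec, mul_nonsing_inv A (isUnit_iff_ne_zero.2 hA.det_pos.ne')]
  have hstable : ∀ i, |1 + β - γ * hA.1.eigenvalues i| < 1 + β := by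
    intro i
    have hpos := hA.eigenvalues_pos i
    have heigL := hL.2 ⟨i, rfl⟩
    have hγL' : γ * L ≤ 1 := (le_div_iff₀ (hpos.trans_le heigL)).1 hγL
    rw [abs_lt]; constructor <;> nlinarith
  have herr := hA.1.tendsto_zero_of_heavyBall_recurrence (abs_lt.2 ⟨by linarith, hβ1⟩) hstable
    (y := fun k => x k - xstar) fun k => by
      simp only [hx (k + 1) (by omega), Nat.add_sub_cancel, map_sub, hfix, sub_neg_eq_add,
        sub_sub_sub_cancel_right]
      abel
  simpa using herr.add_const xstar

/-- For the quadratic `f(x) = (1/2)xᵀAx + xᵀb` with `A` symmetric positive definite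
(smallest eigenvalue `ν > 0`, largest eigenvalue `L`), the heavy ball iterates
`x^{k+1} = x^k - γ∇f(x^k) + β(x^k - x^{k-1})` with step size `0 < γ ≤ 1/L` and
momentum `0 ≤ β < 1` converge to the minimizer `x* = -A⁻¹b`. -/
theorem heavy_ball_converges_to_minimizer {d : ℕ}
    (A : Matrix (Fin d) (Fin d) ℝ) (hA : A.PosDef) (ν L : ℝ)
    (hν : IsLeast (Set.range hA.1.eigenvalues) ν)
    (hL : IsGreatest (Set.range hA.1.eigenvalues) L)
    (hν0 : 0 < ν)
    (b : EuclideanSpace ℝ (Fin d)) (γ β : ℝ)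
    (hγ0 : 0 < γ) (hγL : γ ≤ 1 / L)
    (hβ0 : 0 ≤ β) (hβ1 : β < 1)
    (x : ℕ → EuclideanSpace ℝ (Fin d))
    (hx : ∀ k, 1 ≤ k →
      x (k + 1) = x k - γ • (Matrix.toEuclideanLin A (x k) + b)
        + β • (x k - x (k - 1)))
    (xstar : EuclideanSpace ℝ (Fin d))
    (hxstar : xstar = -(Matrix.toEuclideanLin A⁻¹ b)) :
    Tendsto x atTop (nhds xstar) :=
  heavy_ball_converges_to_minimizer_general A hA L hL b γ β hγ0 hγL hβ0 hβ1 x hx xstar hxstar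
end
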